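/- Under the same hypothesis that ‖z − α x^(i₀)‖² + 2σ² log(N/η) ≤ ‖z − α x^(j)‖² for all j ≠ i₀, the empirical score satisfies ‖s_⋆(z) − (−z + α x^(i₀))/σ²‖ ≤ (α η / σ²) · max_{j} ‖x^(j) − x^(i₀)‖. -/

import Mathlib

/-!
The score is `σ⁻² (-z + α ∑ᵢ wᵢ xᵢ)` with softmax weights `wᵢ`, so its deviation from
`σ⁻² (-z + α x_{i₀})` is `α σ⁻² ∑ᵢ wᵢ (xᵢ - x_{i₀})`. The margin says that every logit
`-‖z - α xⱼ‖² / (2σ²)`, `j ≠ i₀`, lies at least `log (N/η)` below that of `i₀`, so each such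
weight is at most `η / N`; summing at most `N` terms of size `(η/N) · maxⱼ ‖xⱼ - x_{i₀}‖`
gives the bound.
-/

open Finset

noncomputable def smWeight {d N : ℕ} (x : Fin N → EuclideanSpace ℝ (Fin d))
    (α σ : ℝ) (z : EuclideanSpace ℝ (Fin d)) (i : Fin N) : ℝ :=
  Real.exp (-‖z - α • x i‖ ^ 2 / (2 * σ ^ 2)) /
    ∑ j, Real.exp (-‖z - α • x j‖ ^ 2 / (2 * σ ^ 2))

noncomputable def empiricalScore {d N : ℕ} (x : Fin N → EuclideanSpace ℝ (Fin d))
    (α σ : ℝ) (z : EuclideanSpace ℝ (Fin d)) : EuclideanSpace ℝ (Fin d) :=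
  (σ ^ 2)⁻¹ • (-z + α • ∑ i, smWeight x α σ z i • x i)

theorem exp_div_sum_exp_le_exp_neg {ι : Type*} [Fintype ι] (f : ι → ℝ) {i j : ι} {c : ℝ}
    (hgap : f j + c ≤ f i) : Real.exp (f j) / ∑ k, Real.exp (f k) ≤ Real.exp (-c) := by
  have hsum : Real.exp (f i) ≤ ∑ k, Real.exp (f k) :=
    single_le_sum (fun k _ => (Real.exp_pos (f k)).le) (mem_univ i)
  rw [div_le_iff₀ (hsum.trans_lt' (Real.exp_pos _))]
  calc Real.exp (f j) ≤ Real.exp (f i) * Real.exp (-c) := by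
        rw [← Real.exp_add]; exact Real.exp_le_exp.mpr (by linarith)
    _ ≤ Real.exp (-c) * ∑ k, Real.exp (f k) := by
        rw [mul_comm]; gcongr

theorem norm_sum_smul_sub_le {ι E : Type*} [Fintype ι] [NormedAddCommGroup E] [NormedSpace ℝ E]
    (w : ι → ℝ) (v : ι → E) (i₀ : ι) {ε M : ℝ} (hw0 : ∀ i, 0 ≤ w i) (hw1 : ∑ i, w i = 1)
    (hε : 0 ≤ ε) (hwε : ∀ j, j ≠ i₀ → w j ≤ ε) (hM : ∀ j, ‖v j - v i₀‖ ≤ M) :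
    ‖∑ i, w i • v i - v i₀‖ ≤ Fintype.card ι * ε * M := by
  have hterm : ∀ i, ‖w i • (v i - v i₀)‖ ≤ ε * M := by
    intro i
    rw [norm_smul, Real.norm_of_nonneg (hw0 i)]
    by_cases hi : i = i₀
    · subst hi
      simpa using mul_nonneg hε ((norm_nonneg _).trans (hM i))
    · exact mul_le_mul (hwε i hi) (hM i) (norm_nonneg _) hε
  have hcenter : ∑ i, w i • v i - v i₀ = ∑ i, w i • (v i - v i₀) := by
    simp only [smul_sub, sum_sub_distrib, ← sum_smul, hw1, one_smul]
  calc ‖∑ i, w i • v i - v i₀‖ ≤ ∑ i, ‖w i • (v i - v i₀)‖ := hcenter ▸ norm_sum_le _ _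
    _ ≤ Fintype.card ι • (ε * M) := sum_le_card_nsmul _ _ _ fun i _ => hterm i
    _ = Fintype.card ι * ε * M := by rw [nsmul_eq_mul, mul_assoc]

section SoftmaxWeights

variable {d N : ℕ} (x : Fin N → EuclideanSpace ℝ (Fin d)) (α σ : ℝ) (z : EuclideanSpace ℝ (Fin d))

theorem smWeight_nonneg (i : Fin N) : 0 ≤ smWeight x α σ z i :=
  div_nonneg (Real.exp_pos _).le (sum_nonneg fun _ _ => (Real.exp_pos _).le)

theorem sum_smWeight (i₀ : Fin N) : ∑ i, smWeight x α σ z i = 1 := by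
  unfold smWeight
  rw [← sum_div, div_self (sum_pos (fun _ _ => Real.exp_pos _) ⟨i₀, mem_univ i₀⟩).ne']

theorem smWeight_le_of_margin {η : ℝ} (hσ : 0 < σ) (hη : 0 < η) (i₀ : Fin N)
    (hmargin : ∀ j : Fin N, j ≠ i₀ →
      ‖z - α • x i₀‖ ^ 2 + 2 * σ ^ 2 * Real.log (N / η) ≤ ‖z - α • x j‖ ^ 2)
    {j : Fin N} (hj : j ≠ i₀) : smWeight x α σ z j ≤ η / N := by
  have hN : (0 : ℝ) < N := Nat.cast_pos.mpr (Fin.pos i₀)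
  have hgap : -‖z - α • x j‖ ^ 2 / (2 * σ ^ 2) + Real.log (N / η)
      ≤ -‖z - α • x i₀‖ ^ 2 / (2 * σ ^ 2) := by
    have h2σ : 0 < 2 * σ ^ 2 := by positivity
    rw [div_add' _ _ _ h2σ.ne', div_le_div_iff_of_pos_right h2σ]
    linarith [hmargin j hj]
  calc smWeight x α σ z j ≤ Real.exp (-Real.log (N / η)) :=
        exp_div_sum_exp_le_exp_neg (fun i => -‖z - α • x i‖ ^ 2 / (2 * σ ^ 2)) hgap
    _ = η / N := by rw [Real.exp_neg, Real.exp_log (by positivity), inv_div]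

theorem empiricalScore_sub_smul (i₀ : Fin N) :
    empiricalScore x α σ z - (σ ^ 2)⁻¹ • (-z + α • x i₀)
      = ((σ ^ 2)⁻¹ * α) • (∑ i, smWeight x α σ z i • x i - x i₀) := by
  unfold empiricalScore
  module

end SoftmaxWeights

theorem empiricalScore_collapse_general {d N : ℕ} (x : Fin N → EuclideanSpace ℝ (Fin d))
    (α σ : ℝ) (hα : 0 < α) (hσ : 0 < σ) (z : EuclideanSpace ℝ (Fin d))
    (η : ℝ) (hη0 : 0 < η) (i₀ : Fin N)
    (hmargin : ∀ j : Fin N, j ≠ i₀ →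
      ‖z - α • x i₀‖ ^ 2 + 2 * σ ^ 2 * Real.log (N / η) ≤ ‖z - α • x j‖ ^ 2) :
    ‖empiricalScore x α σ z - (σ ^ 2)⁻¹ • (-z + α • x i₀)‖
      ≤ α * η / σ ^ 2 * (univ.sup' ⟨i₀, mem_univ i₀⟩ fun j => ‖x j - x i₀‖) := by
  set M := univ.sup' ⟨i₀, mem_univ i₀⟩ fun j => ‖x j - x i₀‖
  have hN : (0 : ℝ) < N := Nat.cast_pos.mpr (Fin.pos i₀)
  have hdev : ‖∑ i, smWeight x α σ z i • x i - x i₀‖ ≤ N * (η / N) * M := by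
    simpa using norm_sum_smul_sub_le (smWeight x α σ z) x i₀ (smWeight_nonneg x α σ z)
      (sum_smWeight x α σ z i₀) (by positivity)
      (fun j hj => smWeight_le_of_margin x α σ z hσ hη0 i₀ hmargin hj)
      (fun j => le_sup' (fun j => ‖x j - x i₀‖) (mem_univ j))
  rw [empiricalScore_sub_smul, norm_smul, Real.norm_of_nonneg (by positivity)]
  calc (σ ^ 2)⁻¹ * α * ‖∑ i, smWeight x α σ z i • x i - x i₀‖
      ≤ (σ ^ 2)⁻¹ * α * (N * (η / N) * M) := by gcongr
    _ = α * η / σ ^ 2 * M := by field_simp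

/-- Under the margin condition, the empirical score approximately points to the nearest
shell center: `‖s_⋆(z) − (−z + α x^(i₀))/σ²‖ ≤ (α η / σ²) · max_j ‖x^(j) − x^(i₀)‖`. -/
theorem empiricalScore_collapse {d N : ℕ} (x : Fin N → EuclideanSpace ℝ (Fin d))
    (α σ : ℝ) (hα : 0 < α) (hσ : 0 < σ) (z : EuclideanSpace ℝ (Fin d))
    (η : ℝ) (hη0 : 0 < η) (hη1 : η < 1) (i₀ : Fin N)
    (hmargin : ∀ j : Fin N, j ≠ i₀ →
      ‖z - α • x i₀‖ ^ 2 + 2 * σ ^ 2 * Real.log (N / η) ≤ ‖z - α • x j‖ ^ 2) :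
    ‖empiricalScore x α σ z - (σ ^ 2)⁻¹ • (-z + α • x i₀)‖
      ≤ α * η / σ ^ 2 * (univ.sup' ⟨i₀, mem_univ i₀⟩ fun j => ‖x j - x i₀‖) :=
  empiricalScore_collapse_general x α σ hα hσ z η hη0 i₀ hmargin
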